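/- arXiv:2011.10450 — 4 statements merged into one kernel-verified Lean document; each statement's English description precedes it below -/
import Mathlib

section
/- Let K = (L+Q)^{-1}Q with L a graph Laplacian and Q diagonal positive. Let x̃ be the forest estimator with coordinatewise variances Var(x̃(i)) = (K y^{(2)})_i − ((K y)_i)². Then the Q-weighted expected squared error satisfies ∑_i q_i Var(x̃(i)) = yᵀ(Q − KᵀQK)y. -/
open Matrix Finset

/-- With `K = (L+Q)⁻¹ Q` and coordinatewise variances
`Var(x̃(i)) = (K y⁽²⁾) i − ((K y) i)²`, the `Q`-weighted expected squared error
satisfies `∑ i q i Var(x̃(i)) = yᵀ (Q − Kᵀ Q K) y`. -/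
theorem stmt_8 {n : ℕ} (L : Matrix (Fin n) (Fin n) ℝ) (hL : L.PosSemidef)
    (hrow : L.mulVec (fun _ => (1 : ℝ)) = 0)
    (q : Fin n → ℝ) (hq : ∀ i, 0 < q i)
    (K : Matrix (Fin n) (Fin n) ℝ)
    (hK : K = (L + Matrix.diagonal q)⁻¹ * Matrix.diagonal q)
    (y : Fin n → ℝ) :
    ∑ i, q i * (K.mulVec (fun k => (y k) ^ 2) i - (K.mulVec y i) ^ 2)
      = y ⬝ᵥ ((Matrix.diagonal q - Kᵀ * Matrix.diagonal q * K).mulVec y) := by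
  set Q : Matrix (Fin n) (Fin n) ℝ := Matrix.diagonal q with hQ
  set A : Matrix (Fin n) (Fin n) ℝ := L + Q with hA
  have hApd : A.PosDef := Matrix.PosDef.posSemidef_add hL (Matrix.PosDef.diagonal hq)
  have hAinv : IsUnit A.det := hApd.det_pos.ne'.isUnit
  have hAsymm : Aᵀ = A := by simpa using hApd.isHermitian.eq
  -- A 1 = Q 1
  have hA1 : A.mulVec (fun _ => (1 : ℝ)) = Q.mulVec (fun _ => (1 : ℝ)) := by
    rw [hA, Matrix.add_mulVec, hrow, zero_add]
  -- K 1 = 1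
  have hK1 : K.mulVec (fun _ => (1 : ℝ)) = (fun _ => (1 : ℝ)) := by
    rw [hK, ← Matrix.mulVec_mulVec, ← hA1, Matrix.mulVec_mulVec,
      Matrix.nonsing_inv_mul A hAinv, Matrix.one_mulVec]
  -- Kᵀ Q = Q K
  have hKQ : Kᵀ * Q = Q * K := by
    rw [hK, Matrix.transpose_mul, Matrix.transpose_nonsing_inv, hAsymm,
      Matrix.diagonal_transpose, Matrix.mul_assoc]
  -- Kᵀ q = q  (q as vector)
  have hKq : Kᵀ.mulVec q = q := by
    have h1 : Q.mulVec (fun _ => (1 : ℝ)) = q := by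
      ext i; simp [hQ, Matrix.mulVec_diagonal]
    calc Kᵀ.mulVec q = Kᵀ.mulVec (Q.mulVec fun _ => (1 : ℝ)) := by rw [h1]
      _ = (Kᵀ * Q).mulVec (fun _ => (1 : ℝ)) := by rw [Matrix.mulVec_mulVec]
      _ = (Q * K).mulVec (fun _ => (1 : ℝ)) := by rw [hKQ]
      _ = Q.mulVec (K.mulVec fun _ => (1 : ℝ)) := by rw [Matrix.mulVec_mulVec]
      _ = q := by rw [hK1, h1]
  have key : ∀ v : Fin n → ℝ, ∑ i, q i * K.mulVec v i = ∑ i, q i * v i := by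
    intro v
    calc ∑ i, q i * K.mulVec v i = q ⬝ᵥ K.mulVec v := rfl
      _ = (Kᵀ.mulVec q) ⬝ᵥ v := by
          rw [Matrix.dotProduct_mulVec, ← Matrix.mulVec_transpose]
      _ = q ⬝ᵥ v := by rw [hKq]
      _ = ∑ i, q i * v i := rfl
  have hqsq : ∑ i, q i * K.mulVec (fun k => (y k) ^ 2) i = ∑ i, q i * (y i) ^ 2 :=
    key _
  have hrhs2 : y ⬝ᵥ ((Kᵀ * Q * K).mulVec y) = ∑ i, q i * (K.mulVec y i) ^ 2 := by
    have h2 : (Kᵀ * Q * K).mulVec y = Kᵀ.mulVec (Q.mulVec (K.mulVec y)) := by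
      rw [← Matrix.mulVec_mulVec, ← Matrix.mulVec_mulVec]
    rw [h2, Matrix.dotProduct_mulVec, ← Matrix.mulVec_transpose,
      Matrix.transpose_transpose]
    simp only [dotProduct, hQ, Matrix.mulVec_diagonal]
    exact Finset.sum_congr rfl fun i _ => by ring
  rw [Matrix.sub_mulVec, dotProduct_sub, hrhs2]
  have hrhs1 : y ⬝ᵥ Q.mulVec y = ∑ i, q i * (y i) ^ 2 := by
    simp only [dotProduct, hQ, Matrix.mulVec_diagonal]
    exact Finset.sum_congr rfl fun i _ => by ring
  rw [hrhs1]
  simp only [mul_sub]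
  rw [Finset.sum_sub_distrib, hqsq]
end

section
/- Let Φ be a random rooted spanning forest with root map r_Φ and induced partition π(Φ), such that ℙ(r_Φ(i)=j) = K_{ij} and, conditionally on π(Φ) = P, ℙ(r_Φ(i)=j | π(Φ)=P) = q_j·𝟙(j ∈ V_{t(i)})/∑_{k ∈ V_{t(i)}} q_k. Then the random block-averaging matrix S associated with π(Φ) satisfies 𝔼[S] = K, and hence the Rao-Blackwellized estimator x̄ = S y is unbiased: 𝔼[x̄] = K y. -/
open Matrix Finset

/-- If `ℙ(r_Φ(i)=j) = K i j` and, conditionally on the induced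
partition `π(Φ) = τ`, the root distribution is
`ℙ(r_Φ(i)=j | π(Φ)=τ) = q j 𝟙(τ j = τ i)/∑_{k : τ k = τ i} q k`, then the random
block-averaging matrix satisfies `𝔼[S] = K` and the Rao–Blackwellized estimator
`x̄ = S y` is unbiased: `𝔼[x̄] = K y`. -/
theorem stmt_11 {n m : ℕ} {Ω : Type*} [Fintype Ω]
    (p : Ω → ℝ) (hp : ∀ ω, 0 ≤ p ω) (hp1 : ∑ ω, p ω = 1)
    (r : Ω → Fin n → Fin n) (t : Ω → Fin n → Fin m)
    (q : Fin n → ℝ) (hq : ∀ i, 0 < q i)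
    (K : Matrix (Fin n) (Fin n) ℝ)
    (S : (Fin n → Fin m) → Matrix (Fin n) (Fin n) ℝ)
    (hSdef : ∀ τ i j, S τ i j =
      (if τ j = τ i then q j else 0) / ∑ k ∈ Finset.univ.filter (fun k => τ k = τ i), q k)
    (hK : ∀ i j, K i j = ∑ ω, if r ω i = j then p ω else 0)
    (hcond : ∀ (τ : Fin n → Fin m) (i j : Fin n),
      (∑ ω, if t ω = τ ∧ r ω i = j then p ω else 0)
        = S τ i j * ∑ ω, if t ω = τ then p ω else 0)
    (y : Fin n → ℝ) :
    (∀ i j, ∑ ω, p ω * S (t ω) i j = K i j) ∧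
      (∀ i, ∑ ω, p ω * (S (t ω)).mulVec y i = K.mulVec y i) := by
  have h1 : ∀ i j, ∑ ω, p ω * S (t ω) i j = K i j := by
    intro i j
    have step1 : ∑ ω, p ω * S (t ω) i j
        = ∑ τ : Fin n → Fin m, ∑ ω, if t ω = τ then p ω * S τ i j else 0 := by
      rw [Finset.sum_comm]
      refine Finset.sum_congr rfl fun ω _ => ?_
      simp
    rw [step1, hK]
    have step2 : ∀ τ : Fin n → Fin m,
        (∑ ω, if t ω = τ then p ω * S τ i j else 0)
          = ∑ ω, if t ω = τ ∧ r ω i = j then p ω else 0 := by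
      intro τ
      rw [hcond τ i j, Finset.mul_sum]
      refine Finset.sum_congr rfl fun ω _ => ?_
      by_cases h : t ω = τ <;> simp [h, mul_comm]
    simp only [step2]
    rw [Finset.sum_comm]
    refine Finset.sum_congr rfl fun ω _ => ?_
    by_cases h : r ω i = j <;> simp [h]
  refine ⟨h1, fun i => ?_⟩
  simp only [Matrix.mulVec, dotProduct, Finset.mul_sum]
  rw [Finset.sum_comm]
  refine Finset.sum_congr rfl fun j _ => ?_
  rw [← h1 i j, Finset.sum_mul]
  exact Finset.sum_congr rfl fun ω _ => by ring
end

section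
/- Let K = (L+Q)^{-1}Q with L PSD Laplacian and Q diagonal positive definite. Then the matrix Q − KᵀQK is positive semidefinite, i.e., yᵀ(Q − KᵀQK)y ≥ 0 for all y ∈ ℝ^n. -/
open Matrix Finset

/-- With `K = (L+Q)⁻¹ Q`, `L` PSD and `Q` diagonal positive,
the matrix `Q − Kᵀ Q K` is positive semidefinite: `yᵀ(Q − Kᵀ Q K)y ≥ 0` for
all `y`. -/
theorem stmt_14 {n : ℕ} (L : Matrix (Fin n) (Fin n) ℝ) (hL : L.PosSemidef)
    (q : Fin n → ℝ) (hq : ∀ i, 0 < q i)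
    (K : Matrix (Fin n) (Fin n) ℝ)
    (hK : K = (L + Matrix.diagonal q)⁻¹ * Matrix.diagonal q) :
    ∀ y : Fin n → ℝ,
      0 ≤ y ⬝ᵥ ((Matrix.diagonal q - Kᵀ * Matrix.diagonal q * K).mulVec y) := by
  intro y
  have hQpd : (Matrix.diagonal q).PosDef := Matrix.posDef_diagonal_iff.mpr hq
  have hM : (L + Matrix.diagonal q).PosDef := Matrix.PosDef.posSemidef_add hL hQpd
  have hMK : (L + Matrix.diagonal q) * K = Matrix.diagonal q := by
    rw [hK, ← Matrix.mul_assoc, Matrix.mul_nonsing_inv _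
      ((Matrix.isUnit_iff_isUnit_det _).mp hM.isUnit), Matrix.one_mul]
  set x := K.mulVec y with hx
  set a := L.mulVec x with ha
  -- componentwise relation: q i * y i = a i + q i * x i
  have hcomp : ∀ i, q i * y i = a i + q i * x i := by
    intro i
    have h1 : ((L + Matrix.diagonal q) * K).mulVec y = (Matrix.diagonal q).mulVec y := by
      rw [hMK]
    rw [← Matrix.mulVec_mulVec, Matrix.add_mulVec] at h1
    have := congrFun h1 i
    simp only [Pi.add_apply, Matrix.mulVec_diagonal] at this
    rw [ha, hx]
    linarith [this]
  -- rewrite the quadratic form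
  have hsplit : y ⬝ᵥ ((Matrix.diagonal q - Kᵀ * Matrix.diagonal q * K).mulVec y)
      = y ⬝ᵥ ((Matrix.diagonal q).mulVec y) - x ⬝ᵥ ((Matrix.diagonal q).mulVec x) := by
    rw [Matrix.sub_mulVec, dotProduct_sub]
    congr 1
    rw [Matrix.mul_assoc, ← Matrix.mulVec_mulVec, Matrix.dotProduct_mulVec,
      Matrix.vecMul_transpose, ← hx, ← Matrix.mulVec_mulVec, ← hx]
  rw [hsplit]
  have key : y ⬝ᵥ ((Matrix.diagonal q).mulVec y) - x ⬝ᵥ ((Matrix.diagonal q).mulVec x)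
      = (∑ i, a i ^ 2 / q i) + 2 * (x ⬝ᵥ a) := by
    simp only [dotProduct, Matrix.mulVec_diagonal, Finset.mul_sum, ← Finset.sum_sub_distrib,
      ← Finset.sum_add_distrib]
    apply Finset.sum_congr rfl
    intro i _
    have hqi := (hq i).ne'
    have hyi : y i = (a i + q i * x i) / q i := by
      field_simp
      linarith [hcomp i]
    rw [hyi]
    field_simp
    ring
  rw [key]
  have h1 : 0 ≤ ∑ i, a i ^ 2 / q i :=
    Finset.sum_nonneg fun i _ => div_nonneg (sq_nonneg _) (hq i).le
  have h2 : 0 ≤ x ⬝ᵥ a := by simpa using hL.dotProduct_mulVec_nonneg x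
  linarith
end

section
/- Let L be a graph Laplacian, partition V into ℓ and u with L_{u|u} invertible, and for α > 0 define Q_α diagonal with (Q_α)_{ii} = α for i ∈ ℓ and 0 for i ∈ u. Then K_α = (L + Q_α)^{-1} Q_α converges as α → ∞, and for y supported arbitrarily, the limit satisfies: (lim K_α y)_i = y_i for i ∈ ℓ and (lim K_α y)_i = (−(L_{u|u})^{-1} L_{u|ℓ} y_ℓ)_i for i ∈ u. -/
open Matrix Finset Filter

lemma posdef_coercive {n : ℕ} {A : Matrix (Fin n) (Fin n) ℝ} (hA : A.PosDef) :
    ∃ c > 0, ∀ x : Fin n → ℝ, c * (x ⬝ᵥ x) ≤ x ⬝ᵥ A *ᵥ x := by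
  rcases Nat.eq_zero_or_pos n with h0 | hn
  · refine ⟨1, one_pos, fun x => ?_⟩
    subst h0
    simp [dotProduct]
  · have hf : Continuous fun x : EuclideanSpace ℝ (Fin n) =>
        (x : Fin n → ℝ) ⬝ᵥ A *ᵥ (x : Fin n → ℝ) := by
      simp only [dotProduct, mulVec]
      fun_prop
    have hsph : (Metric.sphere (0 : EuclideanSpace ℝ (Fin n)) 1).Nonempty := by
      refine ⟨EuclideanSpace.single ⟨0, hn⟩ (1 : ℝ), ?_⟩
      simp [EuclideanSpace.norm_single]
    obtain ⟨z, hz, hmin⟩ := (isCompact_sphere (0 : EuclideanSpace ℝ (Fin n)) 1).exists_isMinOn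
      hsph hf.continuousOn
    have hz1 : ‖z‖ = 1 := by simpa using hz
    have hzne : (z : Fin n → ℝ) ≠ 0 := by
      intro h
      have : z = 0 := by simpa using h
      rw [this] at hz1; simp at hz1
    have hc : 0 < (z : Fin n → ℝ) ⬝ᵥ A *ᵥ (z : Fin n → ℝ) := by
      have := hA.dotProduct_mulVec_pos hzne
      simpa using this
    refine ⟨_, hc, fun x => ?_⟩
    by_cases hx : x = 0
    · simp [hx]
    · set x' : EuclideanSpace ℝ (Fin n) := WithLp.toLp 2 x with hx'
      have hxne : x' ≠ 0 := by
        rw [hx']; intro h; exact hx (by simpa using congrArg WithLp.ofLp h)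
      have ht : 0 < ‖x'‖ := norm_pos_iff.mpr hxne
      set t : ℝ := ‖x'‖ with htdef
      have hu : (t⁻¹ • x') ∈ Metric.sphere (0 : EuclideanSpace ℝ (Fin n)) 1 := by
        simp only [Metric.mem_sphere, dist_zero_right, norm_smul]
        rw [Real.norm_eq_abs, abs_of_pos (inv_pos.mpr ht), ← htdef, inv_mul_cancel₀ ht.ne']
      have hle := hmin hu
      have hfu : (fun x : EuclideanSpace ℝ (Fin n) =>
          (x : Fin n → ℝ) ⬝ᵥ A *ᵥ (x : Fin n → ℝ)) (t⁻¹ • x')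
          = t⁻¹ * (t⁻¹ * (x ⬝ᵥ A *ᵥ x)) := by
        show ((t⁻¹ • x : Fin n → ℝ) ⬝ᵥ A *ᵥ (t⁻¹ • x)) = _
        rw [smul_dotProduct, mulVec_smul, dotProduct_smul]
        simp [mul_assoc, smul_eq_mul]
      have htt : t ^ 2 = x ⬝ᵥ x := by
        have : t = Real.sqrt (∑ i, ‖x i‖ ^ 2) := by
          rw [htdef, EuclideanSpace.norm_eq]
        rw [this, Real.sq_sqrt (by positivity)]
        simp [dotProduct, sq]
      have hfz : (fun x : EuclideanSpace ℝ (Fin n) =>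
          (x : Fin n → ℝ) ⬝ᵥ A *ᵥ (x : Fin n → ℝ)) z ≤ t⁻¹ * (t⁻¹ * (x ⬝ᵥ A *ᵥ x)) := by
        rw [← hfu]; exact hle
      have h2 : (z : Fin n → ℝ) ⬝ᵥ A *ᵥ (z : Fin n → ℝ) * t ^ 2 ≤ x ⬝ᵥ A *ᵥ x := by
        have h3 := mul_le_mul_of_nonneg_right hfz (le_of_lt (by positivity : (0:ℝ) < t ^ 2))
        calc (z : Fin n → ℝ) ⬝ᵥ A *ᵥ (z : Fin n → ℝ) * t ^ 2
            ≤ t⁻¹ * (t⁻¹ * (x ⬝ᵥ A *ᵥ x)) * t ^ 2 := h3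
          _ = (t⁻¹ * t) * ((t⁻¹ * t) * (x ⬝ᵥ A *ᵥ x)) := by ring
          _ = x ⬝ᵥ A *ᵥ x := by rw [inv_mul_cancel₀ ht.ne']; ring
      calc (z : Fin n → ℝ) ⬝ᵥ A *ᵥ (z : Fin n → ℝ) * (x ⬝ᵥ x)
          = (z : Fin n → ℝ) ⬝ᵥ A *ᵥ (z : Fin n → ℝ) * t ^ 2 := by rw [htt]
        _ ≤ x ⬝ᵥ A *ᵥ x := h2


/-- label propagation limit: with `Q_α = α · diag(𝟙_ℓ)` and
`K_α = (L + Q_α)⁻¹ Q_α`, the matrix `K_α` converges entrywise as `α → ∞`, and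
the limit applied to `y` equals `y` on `ℓ` and the harmonic extension
`−(L_{u|u})⁻¹ L_{u|ℓ} y_ℓ` on the complement `u`. -/
theorem stmt_17 {n : ℕ} (L : Matrix (Fin n) (Fin n) ℝ) (hL : L.PosSemidef)
    (hrow : L.mulVec (fun _ => (1 : ℝ)) = 0)
    (ℓ : Finset (Fin n)) (hℓ : ℓ.Nonempty)
    (Luu : Matrix {i // i ∉ ℓ} {i // i ∉ ℓ} ℝ)
    (hLuu : ∀ i j, Luu i j = L i.1 j.1)
    (Lul : Matrix {i // i ∉ ℓ} {i // i ∈ ℓ} ℝ)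
    (hLul : ∀ i j, Lul i j = L i.1 j.1)
    (hLuuInv : IsUnit Luu.det)
    (y : Fin n → ℝ) :
    ∃ Klim : Matrix (Fin n) (Fin n) ℝ,
      (∀ i j, Tendsto (fun α : ℝ =>
          ((L + Matrix.diagonal (fun k => if k ∈ ℓ then α else 0))⁻¹
            * Matrix.diagonal (fun k => if k ∈ ℓ then α else 0)) i j)
        atTop (nhds (Klim i j))) ∧
      (∀ i, i ∈ ℓ → Klim.mulVec y i = y i) ∧
      (∀ i (hi : i ∉ ℓ),
        Klim.mulVec y i
          = (-((Luu⁻¹ * Lul).mulVec (fun j : {i // i ∈ ℓ} => y j.1))) ⟨i, hi⟩) := by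
  classical
  set D : ℝ → Matrix (Fin n) (Fin n) ℝ :=
    fun α => Matrix.diagonal (fun k => if k ∈ ℓ then α else 0) with hD
  set M : ℝ → Matrix (Fin n) (Fin n) ℝ := fun α => L + D α with hM
  have hdiagQuad : ∀ (α : ℝ) (x : Fin n → ℝ),
      x ⬝ᵥ (D α *ᵥ x) = ∑ k, (if k ∈ ℓ then α else 0) * x k ^ 2 := by
    intro α x
    simp only [hD, dotProduct, mulVec_diagonal]
    exact Finset.sum_congr rfl fun k _ => by ring
  -- positive definiteness of M α for α > 0
  have hMpd : ∀ α : ℝ, 0 < α → (M α).PosDef := by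
    intro α hα
    refine Matrix.PosDef.of_dotProduct_mulVec_pos ?_ ?_
    · exact hL.1.add (isHermitian_diagonal _)
    · intro x hx
      have hsx : star x = x := by
        funext k; simp
      rw [hsx]
      show 0 < x ⬝ᵥ ((L + D α) *ᵥ x)
      rw [add_mulVec, dotProduct_add, hdiagQuad]
      have hLq : 0 ≤ x ⬝ᵥ L *ᵥ x := by simpa [hsx] using hL.dotProduct_mulVec_nonneg x
      by_cases hxl : ∀ k ∈ ℓ, x k = 0
      · have hdz : ∑ k, (if k ∈ ℓ then α else 0) * x k ^ 2 = 0 := by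
          apply Finset.sum_eq_zero; intro k _
          by_cases hk : k ∈ ℓ
          · simp [hk, hxl k hk]
          · simp [hk]
        rw [hdz, add_zero]
        rcases lt_or_eq_of_le hLq with h | h
        · exact h
        · exfalso
          have hLx : L *ᵥ x = 0 := by
            rw [← hL.dotProduct_mulVec_zero_iff x, hsx, ← h]
          have hu : Luu *ᵥ (fun j : {i // i ∉ ℓ} => x j.1) = 0 := by
            funext i
            have h1 : (L *ᵥ x) i.1 = 0 := by rw [hLx]; rfl
            have h2 : ∑ j, L i.1 j * x j
                = (∑ j ∈ ℓ, L i.1 j * x j) + ∑ j ∈ ℓᶜ, L i.1 j * x j :=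
              (Finset.sum_add_sum_compl ℓ _).symm
            have h3 : ∑ j ∈ ℓ, L i.1 j * x j = 0 :=
              Finset.sum_eq_zero fun j hj => by rw [hxl j hj, mul_zero]
            have h4 : ∑ j ∈ ℓᶜ, L i.1 j * x j
                = ∑ j : {i // i ∉ ℓ}, L i.1 j.1 * x j.1 :=
              Finset.sum_subtype ℓᶜ (fun x => Finset.mem_compl) _
            have h5 : (Luu *ᵥ fun j : {i // i ∉ ℓ} => x j.1) i
                = ∑ j : {i // i ∉ ℓ}, L i.1 j.1 * x j.1 := by
              simp only [mulVec, dotProduct, hLuu]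
            have h6 : (L *ᵥ x) i.1 = ∑ j, L i.1 j * x j := by
              simp [mulVec, dotProduct]
            rw [h5, ← h4]
            have := h6 ▸ h1
            rw [h2, h3, zero_add] at this
            simpa using this
          have hinj : Function.Injective (Luu.mulVec) :=
            Matrix.mulVec_injective_iff_isUnit.mpr ((isUnit_iff_isUnit_det Luu).mpr hLuuInv)
          have hxu : (fun j : {i // i ∉ ℓ} => x j.1) = 0 := by
            apply hinj
            rw [hu, Matrix.mulVec_zero]
          apply hx
          funext k
          by_cases hk : k ∈ ℓ
          · exact hxl k hk
          · exact congrFun hxu ⟨k, hk⟩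
      · push_neg at hxl
        obtain ⟨k, hk, hxk⟩ := hxl
        have h2 : 0 < ∑ k, (if k ∈ ℓ then α else 0) * x k ^ 2 := by
          apply Finset.sum_pos'
          · intro j _
            exact mul_nonneg (by by_cases h : j ∈ ℓ <;> simp [h, hα.le]) (sq_nonneg _)
          · refine ⟨k, Finset.mem_univ k, ?_⟩
            have : 0 < x k ^ 2 := lt_of_le_of_ne (sq_nonneg _) (Ne.symm (pow_ne_zero 2 hxk))
            simp only [hk, if_pos]
            exact mul_pos hα this
        linarith
  have hMunit : ∀ α : ℝ, 0 < α → IsUnit (M α).det :=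
    fun α hα => (hMpd α hα).det_pos.ne'.isUnit
  obtain ⟨c, hc, hcoer⟩ := posdef_coercive (hMpd 1 one_pos)
  -- key bound
  have hkey : ∀ i k, k ∈ ℓ → ∀ α : ℝ, 1 ≤ α → ((M α)⁻¹ i k) ^ 2 ≤ 1 / (c * α) := by
    intro i k hk α hα
    have hα0 : (0:ℝ) < α := lt_of_lt_of_le one_pos hα
    set w : Fin n → ℝ := (M α)⁻¹ *ᵥ Pi.single k 1 with hw
    have hwik : w i = (M α)⁻¹ i k := by
      rw [hw, Matrix.mulVec_single]; exact mul_one _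
    have hMw : M α *ᵥ w = Pi.single k 1 := by
      rw [hw, Matrix.mulVec_mulVec, Matrix.mul_nonsing_inv _ (hMunit α hα0), Matrix.one_mulVec]
    have hquad : w ⬝ᵥ (M α *ᵥ w) = w k := by
      rw [hMw, dotProduct_single, mul_one]
    have hsplit : ∀ β : ℝ, w ⬝ᵥ (M β *ᵥ w)
        = w ⬝ᵥ (L *ᵥ w) + ∑ j, (if j ∈ ℓ then β else 0) * w j ^ 2 := by
      intro β
      show w ⬝ᵥ ((L + D β) *ᵥ w) = _
      rw [add_mulVec, dotProduct_add, hdiagQuad]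
    have hLq : 0 ≤ w ⬝ᵥ L *ᵥ w := by
      have := hL.dotProduct_mulVec_nonneg w
      simpa [show star w = w from funext fun _ => rfl] using this
    have hb : α * w k ^ 2 ≤ w k := by
      have h1 : α * w k ^ 2 ≤ ∑ j, (if j ∈ ℓ then α else 0) * w j ^ 2 := by
        have := Finset.single_le_sum
          (f := fun j => (if j ∈ ℓ then α else 0) * w j ^ 2)
          (fun j _ => mul_nonneg (by by_cases h : j ∈ ℓ <;> simp [h, hα0.le]) (sq_nonneg _))
          (Finset.mem_univ k)
        simpa [hk] using this
      have h2 := hsplit α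
      rw [hquad] at h2
      linarith
    have hwk_nonneg : 0 ≤ w k := le_trans (by positivity) hb
    have hwk_le : w k ≤ 1 / α := by
      rw [le_div_iff₀ hα0]
      nlinarith [hb, hwk_nonneg]
    have ha : c * (w ⬝ᵥ w) ≤ w k := by
      have h1 := hcoer w
      have h2 : w ⬝ᵥ (M 1 *ᵥ w) ≤ w ⬝ᵥ (M α *ᵥ w) := by
        rw [hsplit 1, hsplit α]
        have : ∑ j, (if j ∈ ℓ then (1:ℝ) else 0) * w j ^ 2
            ≤ ∑ j, (if j ∈ ℓ then α else 0) * w j ^ 2 := by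
          apply Finset.sum_le_sum
          intro j _
          by_cases h : j ∈ ℓ
          · simp only [h, if_pos]
            exact mul_le_mul_of_nonneg_right hα (sq_nonneg _)
          · simp [h]
        linarith
      rw [hquad] at h2
      linarith
    have hsq : ((M α)⁻¹ i k) ^ 2 ≤ w ⬝ᵥ w := by
      rw [← hwik]
      have h1 : w i ^ 2 ≤ ∑ j, w j ^ 2 :=
        Finset.single_le_sum (fun j _ => sq_nonneg (w j)) (Finset.mem_univ i)
      have h2 : w ⬝ᵥ w = ∑ j, w j ^ 2 := by
        simp [dotProduct, sq]
      rw [h2]; exact h1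
    have h3 : ((M α)⁻¹ i k) ^ 2 * (c * α) ≤ (w ⬝ᵥ w) * (c * α) :=
      mul_le_mul_of_nonneg_right hsq (by positivity)
    have h5 : (c * (w ⬝ᵥ w)) * α ≤ (1 / α) * α :=
      mul_le_mul_of_nonneg_right (le_trans ha hwk_le) hα0.le
    have h6 : (1 / α) * α = 1 := by field_simp
    rw [le_div_iff₀ (by positivity : (0:ℝ) < c * α)]
    nlinarith [h3, h5]
  -- entries of (M α)⁻¹ in ℓ-columns tend to zero
  have hzero : ∀ i k, k ∈ ℓ → Tendsto (fun α : ℝ => (M α)⁻¹ i k) atTop (nhds 0) := by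
    intro i k hk
    apply squeeze_zero_norm' (a := fun α : ℝ => Real.sqrt (1 / (c * α)))
    · filter_upwards [eventually_ge_atTop (1:ℝ)] with α hα
      have h1 := hkey i k hk α hα
      have habs : ‖(M α)⁻¹ i k‖ = Real.sqrt (((M α)⁻¹ i k) ^ 2) := by
        rw [Real.sqrt_sq_eq_abs, Real.norm_eq_abs]
      rw [habs]
      exact Real.sqrt_le_sqrt h1
    · have h1 : Tendsto (fun α : ℝ => 1 / (c * α)) atTop (nhds 0) := by
        have h2 : Tendsto (fun α : ℝ => c * α) atTop atTop :=
          Tendsto.const_mul_atTop hc tendsto_id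
        simpa [one_div, Function.comp_def] using tendsto_inv_atTop_zero.comp h2
      have h2 := (Real.continuous_sqrt.tendsto 0).comp h1
      simpa [Function.comp_def] using h2
  -- the limit matrix
  set Klim : Matrix (Fin n) (Fin n) ℝ := fun i j =>
    if hj : j ∈ ℓ then
      (if hi : i ∈ ℓ then (if i = j then (1:ℝ) else 0)
       else -((Luu⁻¹ * Lul) ⟨i, hi⟩ ⟨j, hj⟩))
    else 0 with hKlim
  refine ⟨Klim, ?_, ?_, ?_⟩
  · -- convergence
    intro i j
    show Tendsto (fun α : ℝ => ((M α)⁻¹ * D α) i j) atTop (nhds (Klim i j))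
    have hKapp : ∀ α : ℝ, ((M α)⁻¹ * D α) i j
        = (M α)⁻¹ i j * (if j ∈ ℓ then α else 0) := fun α => Matrix.mul_diagonal _ _ _ _
    by_cases hj : j ∈ ℓ
    · -- main case
      have hDK : ∀ α : ℝ, D α * Klim = D α := by
        intro α
        funext a b
        show (D α * Klim) a b = Matrix.diagonal _ a b
        rw [Matrix.diagonal_mul]
        by_cases ha : a ∈ ℓ
        · by_cases hab : a = b
          · subst hab
            simp [hKlim, ha, Matrix.diagonal_apply_eq]
          · simp [hKlim, ha, hab, Matrix.diagonal_apply_ne _ hab]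
        · simp [Matrix.diagonal_apply, ha]
      have hBrow : ∀ k, k ∉ ℓ → ∀ b, (L * Klim) k b = 0 := by
        intro k hk b
        rw [Matrix.mul_apply]
        by_cases hb : b ∈ ℓ
        · have hsplit2 : ∑ m, L k m * Klim m b
              = (∑ m ∈ ℓ, L k m * Klim m b) + ∑ m ∈ ℓᶜ, L k m * Klim m b :=
            (Finset.sum_add_sum_compl ℓ _).symm
          have hA : ∑ m ∈ ℓ, L k m * Klim m b = L k b := by
            rw [Finset.sum_eq_single b]
            · simp [hKlim, hb]
            · intro m hm hmb
              simp [hKlim, hm, hb, hmb]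
            · intro h; exact absurd hb h
          have hB : ∑ m ∈ ℓᶜ, L k m * Klim m b
              = -((Luu * (Luu⁻¹ * Lul)) ⟨k, hk⟩ ⟨b, hb⟩) := by
            rw [Finset.sum_subtype ℓᶜ (fun x => Finset.mem_compl) _, Matrix.mul_apply,
              ← Finset.sum_neg_distrib]
            apply Finset.sum_congr rfl
            intro m _
            have hm := m.2
            have hKmb : Klim m.1 b = -((Luu⁻¹ * Lul) m ⟨b, hb⟩) := by
              simp only [hKlim]
              rw [dif_pos hb, dif_neg hm]
            rw [hKmb, hLuu, mul_neg]
          rw [hsplit2, hA, hB, Matrix.mul_nonsing_inv_cancel_left _ _ hLuuInv, hLul]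
          ring
        · apply Finset.sum_eq_zero
          intro m _
          simp [hKlim, hb]
      have hId : ∀ α : ℝ, 1 ≤ α → (M α)⁻¹ * D α = Klim - (M α)⁻¹ * (L * Klim) := by
        intro α hα
        have hα0 : (0:ℝ) < α := lt_of_lt_of_le one_pos hα
        have h1 : M α * Klim = L * Klim + D α := by
          show (L + D α) * Klim = _
          rw [Matrix.add_mul, hDK]
        have h2 : (M α)⁻¹ * (M α * Klim) = Klim :=
          Matrix.nonsing_inv_mul_cancel_left _ _ (hMunit α hα0)
        rw [h1, Matrix.mul_add] at h2
        rw [eq_sub_iff_add_eq, add_comm]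
        exact h2
      have hev : (fun α : ℝ => ((M α)⁻¹ * D α) i j)
          =ᶠ[atTop] fun α => Klim i j - ∑ k ∈ ℓ, (M α)⁻¹ i k * (L * Klim) k j := by
        filter_upwards [eventually_ge_atTop (1:ℝ)] with α hα
        rw [hId α hα, Matrix.sub_apply, Matrix.mul_apply]
        congr 1
        exact (Finset.sum_subset (Finset.subset_univ ℓ)
          (fun k _ hk => by rw [hBrow k hk j, mul_zero])).symm
      have hlim : Tendsto (fun α : ℝ => Klim i j - ∑ k ∈ ℓ, (M α)⁻¹ i k * (L * Klim) k j)
          atTop (nhds (Klim i j)) := by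
        have h0 : Tendsto (fun α : ℝ => ∑ k ∈ ℓ, (M α)⁻¹ i k * (L * Klim) k j)
            atTop (nhds 0) := by
          have := tendsto_finset_sum ℓ
            (fun k hk => (hzero i k hk).mul_const ((L * Klim) k j))
          simpa using this
        simpa using (tendsto_const_nhds (x := Klim i j) (f := atTop)).sub h0
      exact hlim.congr' hev.symm
    · have hfun : (fun α : ℝ => ((M α)⁻¹ * D α) i j) = fun _ => 0 := by
        funext α; rw [hKapp]; simp [hj]
      rw [hfun, show Klim i j = 0 by simp [hKlim, hj]]
      exact tendsto_const_nhds
  · -- on ℓ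
    intro i hi
    show ∑ j, Klim i j * y j = y i
    rw [Finset.sum_eq_single i]
    · simp [hKlim, hi]
    · intro j _ hji
      by_cases hj : j ∈ ℓ <;> simp [hKlim, hj, hi, Ne.symm hji]
    · intro h; exact absurd (Finset.mem_univ i) h
  · -- off ℓ
    intro i hi
    show ∑ j, Klim i j * y j = _
    have h1 : ∑ j, Klim i j * y j = ∑ j ∈ ℓ, Klim i j * y j :=
      (Finset.sum_subset (Finset.subset_univ ℓ) (fun j _ hj => by simp [hKlim, hj])).symm
    have h2 : ∑ j ∈ ℓ, Klim i j * y j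
        = ∑ j : {x // x ∈ ℓ}, Klim i j.1 * y j.1 :=
      Finset.sum_subtype ℓ (fun x => Iff.rfl) _
    rw [h1, h2]
    have h3 : ∀ j : {x // x ∈ ℓ},
        Klim i j.1 * y j.1 = -((Luu⁻¹ * Lul) ⟨i, hi⟩ j * y j.1) := by
      intro j
      simp [hKlim, hi, j.2]
    rw [Finset.sum_congr rfl (fun j _ => h3 j), Finset.sum_neg_distrib]
    simp [Matrix.mulVec, dotProduct]
end
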